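/- Let H be a connected graph of order n with Laplacian eigenvalues μ_1(H) ≥ ... ≥ μ_n(H). Then for every integer k ≥ 1, the algebraic connectivity of the lexicographic power H^k satisfies μ_{n^k − 1}(H^k) = n^{k−1}·μ_{n−1}(H). -/

import Mathlib

open Matrix Finset

universe u

/-- The lexicographic product `H[G]` of two simple graphs. -/
def lexProd {α β : Type u} (H : SimpleGraph α) (G : SimpleGraph β) :
    SimpleGraph (α × β) where
  Adj x y := H.Adj x.1 y.1 ∨ (x.1 = y.1 ∧ G.Adj x.2 y.2)
  symm := ⟨fun x y h => by
    rcases h with h | ⟨h1, h2⟩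
    · exact Or.inl (H.adj_symm h)
    · exact Or.inr ⟨h1.symm, G.adj_symm h2⟩⟩
  loopless := ⟨fun x h => by
    rcases h with h | ⟨_, h2⟩
    · exact H.irrefl h
    · exact G.irrefl h2⟩

/-- Vertex type of the iterated lexicographic product `H^k[G]`. -/
def lexIterVert (α β : Type u) : ℕ → Type u
  | 0 => β
  | k + 1 => α × lexIterVert α β k

/-- Iterated lexicographic product: `H^0[G] = G`, `H^k[G] = H[H^{k-1}[G]]`. -/
def lexIter {α β : Type u} (H : SimpleGraph α) (G : SimpleGraph β) :
    (k : ℕ) → SimpleGraph (lexIterVert α β k)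
  | 0 => G
  | k + 1 => lexProd H (lexIter H G k)

instance lexIterVert.instFintype {α β : Type u} [Fintype α] [Fintype β] :
    ∀ k, Fintype (lexIterVert α β k)
  | 0 => inferInstanceAs (Fintype β)
  | k + 1 =>
      letI := lexIterVert.instFintype (α := α) (β := β) k
      inferInstanceAs (Fintype (α × lexIterVert α β k))

/-- Vertex type of the lexicographic power `H^k` (with `H^0 = K_1`). -/
def powVert (α : Type u) : ℕ → Type u
  | 0 => PUnit
  | 1 => α
  | k + 2 => powVert α (k + 1) × α

/-- Lexicographic powers of a graph: `H^1 = H` and `H^k = H^{k-1}[H]` for `k ≥ 2`. -/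
def lexPow {α : Type u} (H : SimpleGraph α) : (k : ℕ) → SimpleGraph (powVert α k)
  | 0 => ⊥
  | 1 => H
  | k + 2 => lexProd (lexPow H (k + 1)) H

instance powVert.instFintype {α : Type u} [Fintype α] : ∀ k, Fintype (powVert α k)
  | 0 => inferInstanceAs (Fintype PUnit)
  | 1 => inferInstanceAs (Fintype α)
  | k + 2 =>
      letI := powVert.instFintype (α := α) (k + 1)
      inferInstanceAs (Fintype (powVert α (k + 1) × α))

/-- The degree of a vertex. -/
noncomputable def gdeg {α : Type u} [Fintype α] (G : SimpleGraph α) (v : α) : ℕ := by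
  classical exact G.degree v

/-- The adjacency spectrum of a graph, as the multiset of roots (eigenvalues, with
multiplicity) of the characteristic polynomial of its adjacency matrix over `ℝ`. -/
noncomputable def adjSpectrum {α : Type u} [Fintype α] (G : SimpleGraph α) : Multiset ℝ := by
  classical exact (Matrix.charpoly (G.adjMatrix ℝ)).roots

/-- The Laplacian spectrum of a graph, as the multiset of roots (eigenvalues, with
multiplicity) of the characteristic polynomial of its Laplacian matrix over `ℝ`. -/
noncomputable def lapSpectrum {α : Type u} [Fintype α] (G : SimpleGraph α) : Multiset ℝ := by
  classical exact (Matrix.charpoly (G.lapMatrix ℝ)).roots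

/-!
Write `n = |V(H)|`, `J` for the all-ones matrix and `U` for an orthonormal eigenbasis of `L_H`
whose column `j₀` is constant (it exists because `H` is connected). The Laplacian of `G[H]` is
`n (D_G ⊗ I) - A_G ⊗ J + I ⊗ L_H`, and conjugation by `I ⊗ U` makes it block diagonal: the block
`j₀` is `n L_G` and the block `j ≠ j₀` is the diagonal matrix `n D_G + μ_j I`. So the Laplacian
spectrum of `H^{k+1} = H^k[H]` consists of `n` times that of `H^k` together with the numbers
`n d(x) + μ_j`. Fiedler's bound `μ_{n-1}(H) (n - 1) ≤ n d(v)`, propagated along the degree formula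
`d(x, y) = n d(x) + d(y)`, shows that the latter are at least `n^k μ_{n-1}(H)`, so the second
smallest eigenvalue is multiplied by `n` at each step.
-/

open Polynomial

theorem Polynomial.roots_prod_univ_X_sub_C {ι R : Type*} [Fintype ι] [CommRing R] [IsDomain R]
    (d : ι → R) : (∏ i, (X - C (d i))).roots = univ.val.map d := by
  simpa [Multiset.map_map, Function.comp_def] using roots_multiset_prod_X_sub_C (univ.val.map d)

namespace Matrix

section CommRing

variable {m o R : Type*} [Fintype m] [DecidableEq m] [CommRing R]

theorem charpoly_conj_of_mul_eq_one {A P Q : Matrix m m R} (hQP : Q * P = 1) :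
    (Q * A * P).charpoly = A.charpoly := by
  rw [charpoly_mul_comm, ← mul_assoc, mul_eq_one_comm.mp hQP, one_mul]

theorem roots_charpoly_of_conj_eq_diagonal [IsDomain R] {A P Q : Matrix m m R} {d : m → R}
    (hQP : Q * P = 1) (h : Q * A * P = diagonal d) :
    A.charpoly.roots = univ.val.map d := by
  rw [← charpoly_conj_of_mul_eq_one hQP, h, charpoly_diagonal, roots_prod_univ_X_sub_C]

theorem charpoly_blockDiagonal [Fintype o] [DecidableEq o] (M : o → Matrix m m R) :
    (blockDiagonal M).charpoly = ∏ j, (M j).charpoly := by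
  have : charmatrix (blockDiagonal M) = blockDiagonal fun j => charmatrix (M j) := by
    ext ⟨i, j⟩ ⟨i', j'⟩
    by_cases hj : j = j'
    · subst hj
      by_cases hi : i = i' <;> simp [blockDiagonal_apply, hi]
    · simp [blockDiagonal_apply, hj]
  rw [charpoly, this, det_blockDiagonal]
  rfl

end CommRing

theorem vecMulVec_self_eq_diagonal_single {m R : Type*} [DecidableEq m] [Semiring R]
    {w : m → R} {j₀ : m} (hw : ∀ j, j ≠ j₀ → w j = 0) :
    vecMulVec w w = diagonal (Pi.single j₀ (w j₀ ^ 2)) := by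
  ext j j'
  by_cases hj : j = j₀
  · subst hj
    by_cases hj' : j' = j
    · simp [hj', vecMulVec_apply, sq]
    · simp [vecMulVec_apply, hw j' hj', Ne.symm hj']
  · simp [vecMulVec_apply, diagonal_apply, hw j hj, hj]

theorem transpose_mul_ones_mul_self {m R : Type*} [Fintype m] [CommSemiring R]
    (U : Matrix m m R) :
    Uᵀ * of (fun _ _ => 1) * U = vecMulVec (Uᵀ *ᵥ fun _ => 1) (Uᵀ *ᵥ fun _ => 1) := by
  have hJ : (of fun _ _ => 1 : Matrix m m R) = vecMulVec (fun _ => 1) fun _ => 1 := by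
    ext
    simp [vecMulVec_apply]
  rw [hJ, mul_vecMulVec, vecMulVec_mul, ← mulVec_transpose]

section Real

variable {m : Type*} [Fintype m] [DecidableEq m]

theorem IsHermitian.exists_orthogonal_conj_eq_diagonal {A : Matrix m m ℝ} (hA : A.IsHermitian) :
    ∃ (U : Matrix m m ℝ) (μ : m → ℝ), Uᵀ * U = 1 ∧ Uᵀ * A * U = diagonal μ := by
  have hUT : star (hA.eigenvectorUnitary : Matrix m m ℝ) = (hA.eigenvectorUnitary)ᵀ := by
    simp [star_eq_conjTranspose]
  refine ⟨hA.eigenvectorUnitary, hA.eigenvalues, hUT ▸ Unitary.coe_star_mul_self _, ?_⟩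
  have := hA.conjStarAlgAut_star_eigenvectorUnitary
  rwa [Unitary.conjStarAlgAut_star_apply, RCLike.ofReal_real_eq_id, Function.id_comp, hUT]
    at this

theorem IsHermitian.roots_charpoly_smul {A : Matrix m m ℝ} (hA : A.IsHermitian) (c : ℝ) :
    (c • A).charpoly.roots = A.charpoly.roots.map (c * ·) := by
  rw [← cfc_const_mul_id c A, hA.charpoly_cfc_eq, hA.roots_charpoly_eq_eigenvalues]
  simpa using roots_prod_univ_X_sub_C (fun i => c * hA.eigenvalues i)

theorem card_mul_sq_eq_one_of_col_const {U : Matrix m m ℝ} (hU : Uᵀ * U = 1) {j : m}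
    {c : ℝ} (hc : ∀ i, U i j = c) : (Fintype.card m : ℝ) * c ^ 2 = 1 := by
  simpa [mul_apply, hc, sq] using congrFun (congrFun hU j) j

theorem eq_of_col_const {U : Matrix m m ℝ} (hU : Uᵀ * U = 1) {j j' : m} {c c' : ℝ}
    (hc : ∀ i, U i j = c) (hc' : ∀ i, U i j' = c') : j = j' := by
  by_contra hne
  have h := congrFun (congrFun hU j) j'
  simp only [mul_apply, transpose_apply, hc, hc', one_apply_ne hne, sum_const, card_univ,
    nsmul_eq_mul] at h
  have h1 := card_mul_sq_eq_one_of_col_const hU hc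
  have h2 := card_mul_sq_eq_one_of_col_const hU hc'
  nlinarith

end Real

end Matrix

section LapSpectrum

variable {V : Type u} [Fintype V]

theorem lapSpectrum_eq_roots_charpoly (G : SimpleGraph V) [DecidableEq V] [DecidableRel G.Adj] :
    lapSpectrum G = (G.lapMatrix ℝ).charpoly.roots := by
  unfold lapSpectrum
  congr!

theorem nonneg_of_mem_lapSpectrum (G : SimpleGraph V) {t : ℝ} (ht : t ∈ lapSpectrum G) :
    0 ≤ t := by
  classical
  rw [lapSpectrum_eq_roots_charpoly, (G.isHermitian_lapMatrix ℝ).roots_charpoly_eq_eigenvalues]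
    at ht
  obtain ⟨i, -, rfl⟩ := Multiset.mem_map.mp ht
  exact (G.posSemidef_lapMatrix ℝ).eigenvalues_nonneg i

theorem zero_mem_lapSpectrum [Nonempty V] (G : SimpleGraph V) : (0 : ℝ) ∈ lapSpectrum G := by
  classical
  rw [lapSpectrum_eq_roots_charpoly, mem_roots (charpoly_monic _).ne_zero, IsRoot.def,
    ← coeff_zero_eq_eval_zero]
  have := det_eq_sign_charpoly_coeff (G.lapMatrix ℝ)
  rw [G.det_lapMatrix_eq_zero] at this
  simpa using this.symm

end LapSpectrum

section Eigenbasis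

variable {α : Type u} [Fintype α] [DecidableEq α] {H : SimpleGraph α} [DecidableRel H.Adj]

theorem SimpleGraph.Connected.col_const_of_conj_lapMatrix_eq_diagonal (hH : H.Connected)
    {U : Matrix α α ℝ} {μ : α → ℝ} (hU : Uᵀ * U = 1)
    (hdiag : Uᵀ * H.lapMatrix ℝ * U = diagonal μ) {j : α} (hj : μ j = 0) (i i' : α) :
    U i j = U i' j := by
  have hLU : H.lapMatrix ℝ * U = U * diagonal μ := by
    rw [← hdiag, ← mul_assoc, ← mul_assoc, mul_eq_one_comm.mp hU, one_mul]
  have hker : H.lapMatrix ℝ *ᵥ (fun i => U i j) = 0 := by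
    ext i
    have := congrFun (congrFun hLU i) j
    rw [mul_diagonal, hj, mul_zero] at this
    simpa [mulVec, dotProduct, mul_apply] using this
  exact H.lapMatrix_mulVec_eq_zero_iff_forall_reachable.mp hker i i' (hH.preconnected i i')

theorem SimpleGraph.Connected.exists_lapMatrix_eigenbasis (hH : H.Connected) :
    ∃ (U : Matrix α α ℝ) (μ : α → ℝ) (j₀ : α), Uᵀ * U = 1 ∧
      Uᵀ * H.lapMatrix ℝ * U = diagonal μ ∧ μ j₀ = 0 ∧
      Uᵀ * of (fun _ _ => 1) * U = diagonal (Pi.single j₀ (Fintype.card α : ℝ)) := by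
  obtain ⟨v₀⟩ := hH.nonempty
  obtain ⟨U, μ, hU, hdiag⟩ := (H.isHermitian_lapMatrix ℝ).exists_orthogonal_conj_eq_diagonal
  have hU' : U * Uᵀ = 1 := mul_eq_one_comm.mp hU
  have hconst : ∀ j, μ j = 0 → ∀ i, U i j = U v₀ j := fun j hj i =>
    hH.col_const_of_conj_lapMatrix_eq_diagonal hU hdiag hj i v₀
  set w := Uᵀ *ᵥ fun _ => (1 : ℝ)
  have hμw : ∀ j, μ j * w j = 0 := by
    have : diagonal μ *ᵥ w = 0 := by
      rw [← hdiag, mulVec_mulVec, mul_assoc, mul_assoc, hU', mul_one, ← mulVec_mulVec,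
        H.lapMatrix_mulVec_const_eq_zero, mulVec_zero]
    simpa [mulVec_diagonal] using congrFun this
  obtain ⟨j₀, hj₀⟩ : ∃ j, w j ≠ 0 := by
    by_contra! h
    have : U *ᵥ w = fun _ => 1 := by rw [mulVec_mulVec, hU', one_mulVec]
    simpa [show w = 0 from funext h] using congrFun this v₀
  have hμ₀ : μ j₀ = 0 := (mul_eq_zero.mp (hμw j₀)).resolve_right hj₀
  -- two distinct columns with eigenvalue `0` would both be constant, contradicting orthogonality
  have hw : ∀ j, j ≠ j₀ → w j = 0 := fun j hj => by_contra fun hwj =>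
    hj (eq_of_col_const hU (hconst j ((mul_eq_zero.mp (hμw j)).resolve_right hwj))
      (hconst j₀ hμ₀))
  have hw₀ : w j₀ ^ 2 = Fintype.card α := by
    have h1 := card_mul_sq_eq_one_of_col_const hU (hconst j₀ hμ₀)
    have h2 : w j₀ = Fintype.card α * U v₀ j₀ := by
      simp [w, mulVec, dotProduct, hconst j₀ hμ₀]
    rw [h2]
    linear_combination (Fintype.card α : ℝ) * h1
  refine ⟨U, μ, j₀, hU, hdiag, hμ₀, ?_⟩
  rw [transpose_mul_ones_mul_self, vecMulVec_self_eq_diagonal_single hw, hw₀]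

end Eigenbasis

section LexProd

open scoped Kronecker

variable {β α : Type u} (G : SimpleGraph β) (H : SimpleGraph α)

@[simp]
theorem lexProd_adj {p q : β × α} :
    (lexProd G H).Adj p q ↔ G.Adj p.1 q.1 ∨ (p.1 = q.1 ∧ H.Adj p.2 q.2) := Iff.rfl

variable [Fintype β] [Fintype α] [DecidableEq β] [DecidableEq α] [DecidableRel G.Adj]
  [DecidableRel H.Adj]

theorem neighborFinset_lexProd [DecidableRel (lexProd G H).Adj] (x : β) (y : α) :
    (lexProd G H).neighborFinset (x, y) =
      G.neighborFinset x ×ˢ univ ∪ {x} ×ˢ H.neighborFinset y := by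
  ext ⟨x', y'⟩
  simp [eq_comm, and_comm]

theorem degree_lexProd [DecidableRel (lexProd G H).Adj] (x : β) (y : α) :
    (lexProd G H).degree (x, y) = Fintype.card α * G.degree x + H.degree y := by
  have hdisj : Disjoint (G.neighborFinset x ×ˢ (univ : Finset α)) ({x} ×ˢ H.neighborFinset y) :=
    disjoint_left.mpr fun p hp hp' => G.irrefl <| by
      simp only [mem_product, mem_singleton, SimpleGraph.mem_neighborFinset] at hp hp'
      exact hp'.1 ▸ hp.1
  rw [← SimpleGraph.card_neighborFinset_eq_degree, neighborFinset_lexProd,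
    card_union_of_disjoint hdisj]
  simp [mul_comm]

theorem lapMatrix_lexProd [DecidableRel (lexProd G H).Adj] :
    (lexProd G H).lapMatrix ℝ =
      (Fintype.card α : ℝ) • (G.degMatrix ℝ ⊗ₖ 1) - G.adjMatrix ℝ ⊗ₖ of (fun _ _ => 1) +
        1 ⊗ₖ H.lapMatrix ℝ := by
  ext ⟨x, y⟩ ⟨x', y'⟩
  by_cases hx : x = x'
  · subst hx
    by_cases hy : y = y'
    · subst hy
      simp [SimpleGraph.lapMatrix, SimpleGraph.degMatrix, degree_lexProd]
    · simp [SimpleGraph.lapMatrix, SimpleGraph.degMatrix, SimpleGraph.adjMatrix_apply, hy]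
  · simp [SimpleGraph.lapMatrix, SimpleGraph.degMatrix, SimpleGraph.adjMatrix_apply, hx]

end LexProd

section Spectral

open scoped Kronecker

variable {α : Type u} [Fintype α] [DecidableEq α] {H : SimpleGraph α} [DecidableRel H.Adj]
  {U : Matrix α α ℝ} {μ : α → ℝ} {j₀ : α}

theorem mul_card_sub_one_le_card_mul_degree (hU : Uᵀ * U = 1)
    (hdiag : Uᵀ * H.lapMatrix ℝ * U = diagonal μ) (hμ₀ : μ j₀ = 0)
    (hJ : Uᵀ * of (fun _ _ => 1) * U = diagonal (Pi.single j₀ (Fintype.card α : ℝ)))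
    {b : ℝ} (hb : ∀ j, j ≠ j₀ → b ≤ μ j) (v : α) :
    b * (Fintype.card α - 1) ≤ Fintype.card α * H.degree v := by
  -- In the eigenbasis `M` is diagonal with entries `n (μ j - b) ≥ 0` (and `0` at `j₀`), so
  -- its diagonal entry `n d(v) - b (n - 1)` is nonnegative.
  set n : ℝ := (Fintype.card α : ℝ)
  set M := n • H.lapMatrix ℝ - b • (n • 1 - of fun _ _ => 1)
  set d : α → ℝ := fun j => n * μ j - b * (n - Pi.single (M := fun _ => ℝ) j₀ n j)
  have hd : 0 ≤ d := by
    intro j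
    by_cases hj : j = j₀
    · subst hj
      simp [d, hμ₀]
    · have : 0 ≤ n := by positivity
      simp only [d, Pi.single_eq_of_ne hj, sub_zero, Pi.zero_apply]
      nlinarith [hb j hj]
  have hM : M = U * diagonal d * Uᵀ := by
    have hU' : U * Uᵀ = 1 := mul_eq_one_comm.mp hU
    have hconj : Uᵀ * M * U = diagonal d := by
      simp only [M, Matrix.mul_sub, Matrix.sub_mul, Matrix.mul_smul, Matrix.smul_mul, hdiag, hJ,
        Matrix.mul_one, hU]
      ext i j
      by_cases h : i = j <;> simp [d, h]
    rw [← hconj, ← mul_assoc, ← mul_assoc, hU', one_mul, mul_assoc, hU', mul_one]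
  have := ((PosSemidef.diagonal hd).mul_mul_conjTranspose_same U).diag_nonneg (i := v)
  rw [conjTranspose_eq_transpose_of_trivial, ← hM] at this
  simp [M, SimpleGraph.lapMatrix, SimpleGraph.degMatrix] at this
  linarith

theorem lapSpectrum_lexProd {β : Type u} [Fintype β] [DecidableEq β] (G : SimpleGraph β)
    [DecidableRel G.Adj] (hU : Uᵀ * U = 1) (hdiag : Uᵀ * H.lapMatrix ℝ * U = diagonal μ)
    (hμ₀ : μ j₀ = 0)
    (hJ : Uᵀ * of (fun _ _ => 1) * U = diagonal (Pi.single j₀ (Fintype.card α : ℝ))) :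
    lapSpectrum (lexProd G H) = (lapSpectrum G).map ((Fintype.card α : ℝ) * ·) +
      (univ.erase j₀).val.bind fun j =>
        univ.val.map fun x => Fintype.card α * G.degree x + μ j := by
  classical
  set n : ℝ := (Fintype.card α : ℝ)
  set B : α → Matrix β β ℝ := fun j =>
    n • G.degMatrix ℝ + μ j • 1 - Pi.single (M := fun _ => ℝ) j₀ n j • G.adjMatrix ℝ
  have hconj : (1 ⊗ₖ Uᵀ) * (lexProd G H).lapMatrix ℝ * (1 ⊗ₖ U) = blockDiagonal B := by
    have hkron : ∀ (X : Matrix β β ℝ) (Y : Matrix α α ℝ),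
        (1 ⊗ₖ Uᵀ) * (X ⊗ₖ Y) * (1 ⊗ₖ U) = X ⊗ₖ (Uᵀ * Y * U) := by
      intro X Y
      rw [← mul_kronecker_mul, ← mul_kronecker_mul, Matrix.one_mul, Matrix.mul_one]
    rw [lapMatrix_lexProd, Matrix.mul_add, Matrix.add_mul, Matrix.mul_sub, Matrix.sub_mul,
      Matrix.mul_smul, Matrix.smul_mul, hkron, hkron, hkron, Matrix.mul_one, hU, hdiag, hJ]
    ext ⟨x, j⟩ ⟨x', j'⟩
    by_cases hj : j = j'
    · simp [B, blockDiagonal_apply, hj, n, one_apply, mul_comm]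
      ring
    · simp [B, blockDiagonal_apply, hj]
  have hQP : (1 ⊗ₖ Uᵀ) * (1 ⊗ₖ U : Matrix (β × α) (β × α) ℝ) = 1 := by
    rw [← mul_kronecker_mul, Matrix.one_mul, hU, one_kronecker_one]
  have hB₀ : B j₀ = n • G.lapMatrix ℝ := by
    simp [B, hμ₀, SimpleGraph.lapMatrix, smul_sub]
  have hB : ∀ j, j ≠ j₀ → B j = diagonal fun x => n * G.degree x + μ j := by
    intro j hj
    ext x x'
    by_cases hx : x = x' <;> simp [B, hj, hx, SimpleGraph.degMatrix]
  have hprod : ∏ j ∈ univ.erase j₀, (B j).charpoly ≠ 0 :=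
    (monic_prod_of_monic _ _ fun j _ => charpoly_monic _).ne_zero
  rw [lapSpectrum_eq_roots_charpoly, ← charpoly_conj_of_mul_eq_one hQP, hconj,
    charpoly_blockDiagonal, ← mul_prod_erase univ _ (mem_univ j₀),
    roots_mul (mul_ne_zero (charpoly_monic _).ne_zero hprod), roots_prod _ _ hprod, hB₀,
    (G.isHermitian_lapMatrix ℝ).roots_charpoly_smul, ← lapSpectrum_eq_roots_charpoly]
  congr 1
  refine Multiset.bind_congr fun j hj => ?_
  rw [hB j (mem_erase.mp (mem_val.mp hj)).1, charpoly_diagonal, roots_prod_univ_X_sub_C]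

end Spectral

/-- `b` is the second smallest element of `s`, counted with multiplicity, and the smallest
is `0`. -/
def HasSpectralGap (s : Multiset ℝ) (b : ℝ) : Prop :=
  ∃ T : Multiset ℝ, s = 0 ::ₘ T ∧ b ∈ T ∧ ∀ t ∈ T, b ≤ t

theorem HasSpectralGap.unique {s : Multiset ℝ} {b b' : ℝ} (h : HasSpectralGap s b)
    (h' : HasSpectralGap s b') : b = b' := by
  obtain ⟨T, rfl, hb, hle⟩ := h
  obtain ⟨T', hT', hb', hle'⟩ := h'
  obtain rfl := (Multiset.cons_inj_right 0).mp hT'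
  exact le_antisymm (hle _ hb') (hle' _ hb)

theorem hasSpectralGap_map_of_antitone {N : ℕ} (hN : 2 ≤ N) {f : Fin N → ℝ} (hf : Antitone f)
    (h₀ : (0 : ℝ) ∈ univ.val.map f) (hnonneg : ∀ i, 0 ≤ f i) :
    HasSpectralGap (univ.val.map f) (f ⟨N - 2, by omega⟩) := by
  set last : Fin N := ⟨N - 1, by omega⟩
  have hle : ∀ i, i ≠ last → f ⟨N - 2, by omega⟩ ≤ f i := fun i hi =>
    hf (Fin.le_def.mpr (by simp [last, Fin.ext_iff] at hi ⊢; omega))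
  have hlast : f last = 0 := by
    obtain ⟨i, -, hi⟩ := Multiset.mem_map.mp h₀
    exact le_antisymm (hi ▸ hf (Fin.le_def.mpr (by simp [last]; omega))) (hnonneg last)
  refine ⟨(univ.erase last).val.map f, ?_, ?_, ?_⟩
  · rw [← hlast, ← Multiset.map_cons, erase_val, Multiset.cons_erase (mem_univ_val _)]
  · refine Multiset.mem_map_of_mem f (mem_val.mpr (mem_erase.mpr ⟨?_, mem_univ _⟩))
    simp [last, Fin.ext_iff]
    omega
  · intro t ht
    obtain ⟨i, hi, rfl⟩ := Multiset.mem_map.mp ht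
    exact hle i (mem_erase.mp (mem_val.mp hi)).1

section LapSpectrumListing

variable {V : Type u} [Fintype V] [Nonempty V] {G : SimpleGraph V} {N : ℕ} {f : Fin N → ℝ}

theorem hasSpectralGap_lapSpectrum_of_antitone (hN : 2 ≤ N) (hf : Antitone f)
    (hG : lapSpectrum G = univ.val.map f) :
    HasSpectralGap (lapSpectrum G) (f ⟨N - 2, by omega⟩) :=
  hG ▸ hasSpectralGap_map_of_antitone hN hf (hG ▸ zero_mem_lapSpectrum G) fun i =>
    nonneg_of_mem_lapSpectrum G (hG ▸ Multiset.mem_map_of_mem f (mem_univ_val i))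

theorem eq_zero_of_lapSpectrum_eq_map (hN : N ≤ 1) (hG : lapSpectrum G = univ.val.map f)
    (i : Fin N) : f i = 0 := by
  obtain ⟨j, -, hj⟩ := Multiset.mem_map.mp (hG ▸ zero_mem_lapSpectrum G)
  rwa [show i = j from Fin.ext (by omega)]

end LapSpectrumListing

theorem HasSpectralGap.lapSpectrum_lexProd {α β : Type u} [Fintype α] [DecidableEq α]
    [Fintype β] [DecidableEq β] {G : SimpleGraph β} [DecidableRel G.Adj] {H : SimpleGraph α}
    [DecidableRel H.Adj] {U : Matrix α α ℝ} {μ : α → ℝ} {j₀ : α} (hU : Uᵀ * U = 1)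
    (hdiag : Uᵀ * H.lapMatrix ℝ * U = diagonal μ) (hμ₀ : μ j₀ = 0)
    (hJ : Uᵀ * of (fun _ _ => 1) * U = diagonal (Pi.single j₀ (Fintype.card α : ℝ)))
    {b : ℝ} (hG : HasSpectralGap (lapSpectrum G) b)
    (hdeg : ∀ x j, j ≠ j₀ → Fintype.card α * b ≤ Fintype.card α * G.degree x + μ j) :
    HasSpectralGap (lapSpectrum (lexProd G H)) (Fintype.card α * b) := by
  obtain ⟨T, hT, hb, hle⟩ := hG
  rw [_root_.lapSpectrum_lexProd G hU hdiag hμ₀ hJ, hT, Multiset.map_cons, mul_zero,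
    Multiset.cons_add]
  refine ⟨_, rfl, Multiset.mem_add.mpr (.inl (Multiset.mem_map_of_mem _ hb)), fun t ht => ?_⟩
  rcases Multiset.mem_add.mp ht with ht | ht
  · obtain ⟨s, hs, rfl⟩ := Multiset.mem_map.mp ht
    exact mul_le_mul_of_nonneg_left (hle s hs) (Nat.cast_nonneg _)
  · obtain ⟨j, hj, ht⟩ := Multiset.mem_bind.mp ht
    obtain ⟨x, -, rfl⟩ := Multiset.mem_map.mp ht
    exact hdeg x j (mem_erase.mp (mem_val.mp hj)).1

section LexPow

variable {α : Type u} [Fintype α] {H : SimpleGraph α}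

theorem gdeg_eq_degree {V : Type u} [Fintype V] (G : SimpleGraph V) [DecidableRel G.Adj]
    (v : V) : gdeg G v = G.degree v := by
  unfold gdeg
  congr!

instance powVert.instNonempty [Nonempty α] : ∀ k, Nonempty (powVert α k)
  | 0 => inferInstanceAs (Nonempty PUnit)
  | 1 => inferInstanceAs (Nonempty α)
  | k + 2 =>
      letI := powVert.instNonempty (k + 1)
      inferInstanceAs (Nonempty (powVert α (k + 1) × α))

theorem gdeg_lexProd {β : Type u} [Fintype β] (G : SimpleGraph β) (H : SimpleGraph α) (x : β)
    (y : α) : gdeg (lexProd G H) (x, y) = Fintype.card α * gdeg G x + gdeg H y := by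
  classical
  simp only [gdeg_eq_degree]
  exact degree_lexProd G H x y

theorem mul_card_pow_sub_one_le_card_mul_gdeg_lexPow {b : ℝ}
    (hb : ∀ y, b * (Fintype.card α - 1) ≤ Fintype.card α * gdeg H y) (m : ℕ)
    (v : powVert α (m + 1)) :
    b * ((Fintype.card α : ℝ) ^ (m + 1) - 1) ≤ Fintype.card α * gdeg (lexPow H (m + 1)) v := by
  induction m with
  | zero =>
    show b * ((Fintype.card α : ℝ) ^ 1 - 1) ≤ Fintype.card α * gdeg H v
    simpa using hb v
  | succ m ih =>
    obtain ⟨x, y⟩ := v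
    have hx := mul_le_mul_of_nonneg_left (ih x) (Nat.cast_nonneg (α := ℝ) (Fintype.card α))
    have hy := hb y
    show _ ≤ Fintype.card α * (gdeg (lexProd (lexPow H (m + 1)) H) (x, y) : ℝ)
    rw [gdeg_lexProd]
    push_cast
    rw [pow_succ]
    linarith

theorem hasSpectralGap_lapSpectrum_lexPow (hH : H.Connected) {a : ℝ}
    (ha : HasSpectralGap (lapSpectrum H) a) (m : ℕ) :
    HasSpectralGap (lapSpectrum (lexPow H (m + 1))) (Fintype.card α ^ m * a) := by
  classical
  obtain ⟨U, μ, j₀, hU, hdiag, hμ₀, hJ⟩ := hH.exists_lapMatrix_eigenbasis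
  have hspec : lapSpectrum H = 0 ::ₘ (univ.erase j₀).val.map μ := by
    rw [lapSpectrum_eq_roots_charpoly, roots_charpoly_of_conj_eq_diagonal hU hdiag, ← hμ₀,
      ← Multiset.map_cons, erase_val, Multiset.cons_erase (mem_univ_val _)]
  have haμ : ∀ j, j ≠ j₀ → a ≤ μ j := by
    obtain ⟨T, hT, -, hle⟩ := ha
    obtain rfl := (Multiset.cons_inj_right 0).mp (hspec.symm.trans hT)
    exact fun j hj =>
      hle _ (Multiset.mem_map_of_mem _ (mem_val.mpr (mem_erase.mpr ⟨hj, mem_univ _⟩)))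
  have hdeg := mul_card_pow_sub_one_le_card_mul_gdeg_lexPow fun y => by
    rw [gdeg_eq_degree H]
    exact mul_card_sub_one_le_card_mul_degree hU hdiag hμ₀ hJ haμ y
  induction m with
  | zero =>
    show HasSpectralGap (lapSpectrum H) _
    simpa using ha
  | succ m ih =>
    rw [pow_succ', mul_assoc]
    refine ih.lapSpectrum_lexProd hU hdiag hμ₀ hJ fun x j hj => ?_
    have hx := hdeg m x
    rw [gdeg_eq_degree] at hx
    have := haμ j hj
    rw [pow_succ] at hx
    linarith

end LexPow

/-- `nu i = μ_{i+1}(H^k)`, so `nu ⟨n^k - 2, _⟩` is the algebraic connectivity `μ_{n^k-1}(H^k)`. -/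
theorem algebraicConnectivity_lexPow {α : Type u} [Fintype α]
    (H : SimpleGraph α) (n : ℕ) (hn : Fintype.card α = n) (hconn : H.Connected)
    (muH : Fin n → ℝ) (hanti : Antitone muH)
    (hspec : lapSpectrum H = Multiset.map muH Finset.univ.val) :
    ∀ k : ℕ, 1 ≤ k →
      ∀ nu : Fin (n ^ k) → ℝ, Antitone nu →
        lapSpectrum (lexPow H k) = Multiset.map nu Finset.univ.val →
        nu ⟨n ^ k - 2, by
            have h0 : 0 < n := hn ▸ Fintype.card_pos_iff.mpr hconn.nonempty
            have h1 : 0 < n ^ k := pow_pos h0 k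
            omega⟩ =
          (n : ℝ) ^ (k - 1) *
            muH ⟨n - 2, by
              have h0 : 0 < n := hn ▸ Fintype.card_pos_iff.mpr hconn.nonempty
              omega⟩ := by
  intro k hk nu hnu hspecPow
  obtain ⟨k, rfl⟩ : ∃ k', k = k' + 1 := ⟨k - 1, by omega⟩
  have := hconn.nonempty
  rcases Nat.lt_or_ge n 2 with hn1 | hn2
  · rw [eq_zero_of_lapSpectrum_eq_map (pow_le_one₀ (Nat.zero_le n) (by omega)) hspecPow,
      eq_zero_of_lapSpectrum_eq_map (by omega) hspec, mul_zero]
  · have hgapH := hasSpectralGap_lapSpectrum_of_antitone hn2 hanti hspec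
    have hgapPow := hasSpectralGap_lapSpectrum_of_antitone
      (hn2.trans (Nat.le_self_pow k.succ_ne_zero n)) hnu hspecPow
    subst hn
    simpa using hgapPow.unique (hasSpectralGap_lapSpectrum_lexPow hconn hgapH k)
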